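/- Let c ≥ 1 and c' ≥ 1 be integers, and let M = (M_1,…,M_c) and M' = (M'_1,…,M'_{c'}) be sequences of positive real numbers. Then F(M ⋈ M') ≥ F(M)·F(M'). -/

import Mathlib

/-!
Induction on `c + c'` of `C(c+c', c) · ∏ M · ∏ M' ≤ ∏_{r ≤ c+c'} (M ⋈ M')_r`. Pascal's rule splits
the binomial coefficient according to whether the last step of a lattice path from `(0,0)` to
`(c,c')` raises `i` or `j`; the two induction hypotheses cost one factor `M_c`, resp. `M'_{c'}`, and
`M_c + M'_{c'}` is bounded by the top entry `(M ⋈ M')_{c+c'}`. Dividing by `(c+c')! = C(c+c',c) c! c'!`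
gives the theorem.
-/

/-- `F(M) = (∏_{i=1}^c M_i)/c!` for a sequence given by `M : ℕ → ℝ` on indices `1,…,c`. -/
noncomputable def Fval (c : ℕ) (M : ℕ → ℝ) : ℝ :=
  (∏ i ∈ Finset.Icc 1 c, M i) / (Nat.factorial c)

/-- Extend a sequence by the convention `M_0 = 0`. -/
def ext0 (M : ℕ → ℝ) : ℕ → ℝ := fun i => if i = 0 then 0 else M i

/-- The upper join `(M ⋈ M')_r = max{M_i + M'_j : i + j = r, 0 ≤ i ≤ c, 0 ≤ j ≤ c'}`,
with the convention `M_0 = M'_0 = 0`. -/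
noncomputable def upperJoin (c c' : ℕ) (M M' : ℕ → ℝ) : ℕ → ℝ := fun r =>
  sSup {x : ℝ | ∃ i j : ℕ, i + j = r ∧ i ≤ c ∧ j ≤ c' ∧ x = ext0 M i + ext0 M' j}

open Finset

section upperJoin

variable {c c' d d' : ℕ} {M M' : ℕ → ℝ}

lemma ext0_nonneg (hM : ∀ i, 1 ≤ i → i ≤ c → 0 ≤ M i) {i : ℕ} (hi : i ≤ c) :
    0 ≤ ext0 M i := by
  unfold ext0
  split_ifs with h
  · exact le_rfl
  · exact hM i (Nat.one_le_iff_ne_zero.mpr h) hi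

lemma bddAbove_upperJoin_set (c c' r : ℕ) (M M' : ℕ → ℝ) :
    BddAbove {x : ℝ | ∃ i j : ℕ, i + j = r ∧ i ≤ c ∧ j ≤ c' ∧ x = ext0 M i + ext0 M' j} := by
  refine ⟨(Iic c).sup' nonempty_Iic (ext0 M) + (Iic c').sup' nonempty_Iic (ext0 M'), ?_⟩
  rintro x ⟨i, j, -, hi, hj, rfl⟩
  exact add_le_add (le_sup' _ (mem_Iic.mpr hi)) (le_sup' _ (mem_Iic.mpr hj))

lemma le_upperJoin {i j : ℕ} (hi : i ≤ c) (hj : j ≤ c') :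
    ext0 M i + ext0 M' j ≤ upperJoin c c' M M' (i + j) :=
  le_csSup (bddAbove_upperJoin_set c c' _ M M') ⟨i, j, rfl, hi, hj, rfl⟩

lemma le_upperJoin_left {r : ℕ} (hr : 1 ≤ r) (hrc : r ≤ c) : M r ≤ upperJoin c c' M M' r := by
  simpa [ext0, Nat.one_le_iff_ne_zero.mp hr] using le_upperJoin (M' := M') (c' := c') (j := 0) hrc (Nat.zero_le _)

lemma le_upperJoin_right {r : ℕ} (hr : 1 ≤ r) (hrc : r ≤ c') : M' r ≤ upperJoin c c' M M' r := by
  simpa [ext0, Nat.one_le_iff_ne_zero.mp hr] using le_upperJoin (M := M) (c := c) (i := 0) (Nat.zero_le _) hrc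

lemma add_le_upperJoin_top (hc : 1 ≤ c) (hc' : 1 ≤ c') :
    M c + M' c' ≤ upperJoin c c' M M' (c + c') := by
  simpa [ext0, Nat.one_le_iff_ne_zero.mp hc, Nat.one_le_iff_ne_zero.mp hc'] using
    le_upperJoin (M := M) (M' := M') (le_refl c) (le_refl c')

lemma upperJoin_nonneg (hM : ∀ i, 1 ≤ i → i ≤ c → 0 ≤ M i)
    (hM' : ∀ j, 1 ≤ j → j ≤ c' → 0 ≤ M' j) {r : ℕ} (hr : r ≤ c + c') :
    0 ≤ upperJoin c c' M M' r := by
  have hi : min r c ≤ c := min_le_right _ _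
  have hj : r - min r c ≤ c' := by omega
  have hr' : min r c + (r - min r c) = r := by omega
  simpa only [hr'] using
    (add_nonneg (ext0_nonneg hM hi) (ext0_nonneg hM' hj)).trans (le_upperJoin hi hj)

lemma upperJoin_mono (hd : c ≤ d) (hd' : c' ≤ d') {r : ℕ} (hr : r ≤ c + c') :
    upperJoin c c' M M' r ≤ upperJoin d d' M M' r := by
  apply csSup_le_csSup (bddAbove_upperJoin_set d d' r M M')
  · exact ⟨_, min r c, r - min r c, by omega, min_le_right _ _, by omega, rfl⟩
  · rintro x ⟨i, j, hij, hi, hj, rfl⟩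
    exact ⟨i, j, hij, hi.trans hd, hj.trans hd', rfl⟩

lemma prod_upperJoin_mono (hM : ∀ i, 1 ≤ i → i ≤ c → 0 ≤ M i)
    (hM' : ∀ j, 1 ≤ j → j ≤ c' → 0 ≤ M' j) (hd : c ≤ d) (hd' : c' ≤ d') :
    ∏ r ∈ Icc 1 (c + c'), upperJoin c c' M M' r ≤ ∏ r ∈ Icc 1 (c + c'), upperJoin d d' M M' r :=
  prod_le_prod (fun _ hr => upperJoin_nonneg hM hM' (mem_Icc.mp hr).2)
    (fun _ hr => upperJoin_mono hd hd' (mem_Icc.mp hr).2)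

end upperJoin

theorem choose_mul_prod_le_prod_upperJoin (c c' : ℕ) (M M' : ℕ → ℝ)
    (hM : ∀ i, 1 ≤ i → i ≤ c → 0 ≤ M i) (hM' : ∀ j, 1 ≤ j → j ≤ c' → 0 ≤ M' j) :
    ((c + c').choose c : ℝ) * ((∏ i ∈ Icc 1 c, M i) * ∏ j ∈ Icc 1 c', M' j)
      ≤ ∏ r ∈ Icc 1 (c + c'), upperJoin c c' M M' r := by
  induction c generalizing c' with
  | zero =>
    simpa using prod_le_prod (fun r hr => hM' r (mem_Icc.mp hr).1 (mem_Icc.mp hr).2)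
      (fun r hr => le_upperJoin_right (mem_Icc.mp hr).1 (mem_Icc.mp hr).2)
  | succ c ihc =>
    induction c' with
    | zero =>
      simpa using prod_le_prod (fun r hr => hM r (mem_Icc.mp hr).1 (mem_Icc.mp hr).2)
        (fun r hr => le_upperJoin_left (mem_Icc.mp hr).1 (mem_Icc.mp hr).2)
    | succ c' ihc' =>
      have hMc : ∀ i, 1 ≤ i → i ≤ c → 0 ≤ M i := fun i h1 h2 => hM i h1 (by omega)
      have hMc' : ∀ j, 1 ≤ j → j ≤ c' → 0 ≤ M' j := fun j h1 h2 => hM' j h1 (by omega)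
      set P := ∏ r ∈ Icc 1 (c + 1 + c'), upperJoin (c + 1) (c' + 1) M M' r
      have hstep_i : ((c + 1 + c').choose c : ℝ) *
          ((∏ i ∈ Icc 1 c, M i) * ∏ j ∈ Icc 1 (c' + 1), M' j) ≤ P := by
        have h := (ihc (c' + 1) hMc hM').trans
          (prod_upperJoin_mono hMc hM' (Nat.le_succ c) le_rfl)
        rwa [show c + (c' + 1) = c + 1 + c' by omega] at h
      have hstep_j : ((c + 1 + c').choose (c + 1) : ℝ) *
          ((∏ i ∈ Icc 1 (c + 1), M i) * ∏ j ∈ Icc 1 c', M' j) ≤ P :=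
        (ihc' hMc').trans (prod_upperJoin_mono hM hMc' le_rfl (Nat.le_succ c'))
      have hP : 0 ≤ P := prod_nonneg fun r hr => upperJoin_nonneg hM hM' (by grind)
      have hMtop := hM (c + 1) le_add_self le_rfl
      have hM'top := hM' (c' + 1) le_add_self le_rfl
      calc ((c + 1 + (c' + 1)).choose (c + 1) : ℝ) *
            ((∏ i ∈ Icc 1 (c + 1), M i) * ∏ j ∈ Icc 1 (c' + 1), M' j)
          = M (c + 1) * (((c + 1 + c').choose c : ℝ) *
              ((∏ i ∈ Icc 1 c, M i) * ∏ j ∈ Icc 1 (c' + 1), M' j)) +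
            M' (c' + 1) * (((c + 1 + c').choose (c + 1) : ℝ) *
              ((∏ i ∈ Icc 1 (c + 1), M i) * ∏ j ∈ Icc 1 c', M' j)) := by
            rw [← add_assoc, Nat.choose_succ_succ', prod_Icc_succ_top (by omega : 1 ≤ c + 1),
              prod_Icc_succ_top (by omega : 1 ≤ c' + 1)]
            push_cast
            ring
        _ ≤ (M (c + 1) + M' (c' + 1)) * P := by
            rw [add_mul]
            gcongr
        _ ≤ upperJoin (c + 1) (c' + 1) M M' (c + 1 + (c' + 1)) * P := by
            gcongr
            exact add_le_upperJoin_top le_add_self le_add_self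
        _ = ∏ r ∈ Icc 1 (c + 1 + (c' + 1)), upperJoin (c + 1) (c' + 1) M M' r := by
            rw [← add_assoc, prod_Icc_succ_top (by omega), mul_comm]

lemma Fval_mul_Fval (c c' : ℕ) (M M' : ℕ → ℝ) :
    Fval c M * Fval c' M' =
      ((c + c').choose c : ℝ) * ((∏ i ∈ Icc 1 c, M i) * ∏ j ∈ Icc 1 c', M' j) /
        (c + c').factorial := by
  rw [Fval, Fval, ← Nat.add_choose_mul_factorial_mul_factorial, Nat.choose_symm_add]
  have hc := c.factorial_pos
  have hc' := c'.factorial_pos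
  have hcc' := (c + c').choose_pos (Nat.le_add_left c' c)
  push_cast
  field_simp

theorem upperJoin_Fval_ge_general (c c' : ℕ) (M M' : ℕ → ℝ)
    (hM : ∀ i, 1 ≤ i → i ≤ c → 0 < M i) (hM' : ∀ j, 1 ≤ j → j ≤ c' → 0 < M' j) :
    Fval c M * Fval c' M' ≤ Fval (c + c') (upperJoin c c' M M') := by
  rw [Fval_mul_Fval, Fval]
  gcongr
  exact choose_mul_prod_le_prod_upperJoin c c' M M'
    (fun i h1 h2 => (hM i h1 h2).le) (fun j h1 h2 => (hM' j h1 h2).le)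

theorem upperJoin_Fval_ge (c c' : ℕ) (hc : 1 ≤ c) (hc' : 1 ≤ c') (M M' : ℕ → ℝ)
    (hM : ∀ i, 1 ≤ i → i ≤ c → 0 < M i) (hM' : ∀ j, 1 ≤ j → j ≤ c' → 0 < M' j) :
    Fval c M * Fval c' M' ≤ Fval (c + c') (upperJoin c c' M M') :=
  upperJoin_Fval_ge_general c c' M M' hM hM'
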